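/- arXiv:2505.19180 — 5 statements merged into one kernel-verified Lean document; each statement's English description precedes it below -/
import Mathlib

section
/- Let r₁, r₂, r₃, n₁, n₂, n₃ be positive natural numbers with nₚ ≥ rₚ, let F : Fin n₁ → Fin n₂ → Fin n₃ → ℝ be a tensor, and for p = 1,2,3 let Uₚ : Matrix (Fin nₚ) (Fin rₚ) ℝ be matrices whose Gram matrices Uₚᵀ Uₚ are invertible (equivalently, Uₚ has full column rank). Define the core tensor A : Fin r₁ → Fin r₂ → Fin r₃ → ℝ by A = F ×₁ U₁† ×₂ U₂† ×₃ U₃†, where Uₚ† = (Uₚᵀ Uₚ)⁻¹ Uₚᵀ, i.e. A(j₁,j₂,j₃) = Σ_{i₁,i₂,i₃} U₁†(j₁,i₁) U₂†(j₂,i₂) U₃†(j₃,i₃) F(i₁,i₂,i₃). Then for every core tensor B : Fin r₁ → Fin r₂ → Fin r₃ → ℝ, the squared Frobenius distance satisfies ‖⟦A;U₁,U₂,U₃⟧ − F‖_F² ≤ ‖⟦B;U₁,U₂,U₃⟧ − F‖_F², i.e. A is a global minimizer of the Tucker least-squares fitting problem. -/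
open Matrix BigOperators

/-- Tucker evaluation of a core tensor `A` with factor matrices `U₁, U₂, U₃`. -/
noncomputable def tucker {n₁ n₂ n₃ r₁ r₂ r₃ : ℕ}
    (A : Fin r₁ → Fin r₂ → Fin r₃ → ℝ)
    (U₁ : Matrix (Fin n₁) (Fin r₁) ℝ) (U₂ : Matrix (Fin n₂) (Fin r₂) ℝ)
    (U₃ : Matrix (Fin n₃) (Fin r₃) ℝ) :
    Fin n₁ → Fin n₂ → Fin n₃ → ℝ :=
  fun i₁ i₂ i₃ => ∑ j₁, ∑ j₂, ∑ j₃, A j₁ j₂ j₃ * U₁ i₁ j₁ * U₂ i₂ j₂ * U₃ i₃ j₃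

/-- Squared Frobenius norm of a third-order tensor. -/
noncomputable def frobSq {n₁ n₂ n₃ : ℕ} (T : Fin n₁ → Fin n₂ → Fin n₃ → ℝ) : ℝ :=
  ∑ i₁, ∑ i₂, ∑ i₃, (T i₁ i₂ i₃) ^ 2

private lemma least_squares_aux {ι κ : Type*} [Fintype ι] [Fintype κ]
    (M : Matrix ι κ ℝ) (f : ι → ℝ) (a b : κ → ℝ)
    (h : Mᵀ *ᵥ (M *ᵥ a - f) = 0) :
    ∑ i, ((M *ᵥ a - f) i) ^ 2 ≤ ∑ i, ((M *ᵥ b - f) i) ^ 2 := by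
  set r := M *ᵥ a - f with hr
  have hb : M *ᵥ b - f = fun i => (M *ᵥ (b - a)) i + r i := by
    funext i
    simp [hr, Matrix.mulVec_sub]
  have hcross : ∑ i, (M *ᵥ (b - a)) i * r i = 0 := by
    have h1 : ∑ i, (M *ᵥ (b - a)) i * r i = ∑ k, (b - a) k * (Mᵀ *ᵥ r) k := by
      simp only [Matrix.mulVec, dotProduct, Matrix.transpose_apply,
        Finset.sum_mul, Finset.mul_sum]
      rw [Finset.sum_comm]
      exact Finset.sum_congr rfl fun k _ => Finset.sum_congr rfl fun i _ => by ring
    rw [h1, h]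
    simp
  rw [hb]
  have hexp : ∑ i, ((M *ᵥ (b - a)) i + r i) ^ 2
      = ∑ i, ((M *ᵥ (b - a)) i) ^ 2 + 2 * ∑ i, (M *ᵥ (b - a)) i * r i
        + ∑ i, (r i) ^ 2 := by
    rw [Finset.mul_sum, ← Finset.sum_add_distrib, ← Finset.sum_add_distrib]
    exact Finset.sum_congr rfl fun i _ => by ring
  calc ∑ i, (r i) ^ 2
      ≤ ∑ i, ((M *ᵥ (b - a)) i) ^ 2 + ∑ i, (r i) ^ 2 := by
        nlinarith [Finset.sum_nonneg (fun i (_ : i ∈ Finset.univ) =>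
          sq_nonneg ((M *ᵥ (b - a)) i))]
    _ = ∑ i, ((M *ᵥ (b - a)) i + r i) ^ 2 := by rw [hexp, hcross]; ring

theorem tucker_pseudoinverse_core_is_global_minimizer
    {r₁ r₂ r₃ n₁ n₂ n₃ : ℕ}
    (hr₁ : 0 < r₁) (hr₂ : 0 < r₂) (hr₃ : 0 < r₃)
    (hn₁ : r₁ ≤ n₁) (hn₂ : r₂ ≤ n₂) (hn₃ : r₃ ≤ n₃)
    (F : Fin n₁ → Fin n₂ → Fin n₃ → ℝ)
    (U₁ : Matrix (Fin n₁) (Fin r₁) ℝ)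
    (U₂ : Matrix (Fin n₂) (Fin r₂) ℝ)
    (U₃ : Matrix (Fin n₃) (Fin r₃) ℝ)
    (hU₁ : IsUnit (U₁ᵀ * U₁)) (hU₂ : IsUnit (U₂ᵀ * U₂)) (hU₃ : IsUnit (U₃ᵀ * U₃))
    (A : Fin r₁ → Fin r₂ → Fin r₃ → ℝ)
    (hA : A = fun j₁ j₂ j₃ => ∑ i₁, ∑ i₂, ∑ i₃,
      ((U₁ᵀ * U₁)⁻¹ * U₁ᵀ) j₁ i₁ * ((U₂ᵀ * U₂)⁻¹ * U₂ᵀ) j₂ i₂ *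
        ((U₃ᵀ * U₃)⁻¹ * U₃ᵀ) j₃ i₃ * F i₁ i₂ i₃) :
    ∀ B : Fin r₁ → Fin r₂ → Fin r₃ → ℝ,
      frobSq (fun i₁ i₂ i₃ => tucker A U₁ U₂ U₃ i₁ i₂ i₃ - F i₁ i₂ i₃) ≤
        frobSq (fun i₁ i₂ i₃ => tucker B U₁ U₂ U₃ i₁ i₂ i₃ - F i₁ i₂ i₃) := by
  intro B
  -- flattened objects
  set M : Matrix ((Fin n₁ × Fin n₂) × Fin n₃) ((Fin r₁ × Fin r₂) × Fin r₃) ℝ :=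
    kroneckerMap (· * ·) (kroneckerMap (· * ·) U₁ U₂) U₃ with hM
  set P : Matrix ((Fin r₁ × Fin r₂) × Fin r₃) ((Fin n₁ × Fin n₂) × Fin n₃) ℝ :=
    kroneckerMap (· * ·)
      (kroneckerMap (· * ·) ((U₁ᵀ * U₁)⁻¹ * U₁ᵀ) ((U₂ᵀ * U₂)⁻¹ * U₂ᵀ))
      ((U₃ᵀ * U₃)⁻¹ * U₃ᵀ) with hP
  set f : (Fin n₁ × Fin n₂) × Fin n₃ → ℝ := fun p => F p.1.1 p.1.2 p.2 with hf
  -- tucker as a matrix-vector product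
  have htuck : ∀ C : Fin r₁ → Fin r₂ → Fin r₃ → ℝ, ∀ p,
      tucker C U₁ U₂ U₃ p.1.1 p.1.2 p.2
        = (M *ᵥ (fun j => C j.1.1 j.1.2 j.2)) p := by
    intro C p
    simp only [tucker, hM, Matrix.mulVec, dotProduct, Fintype.sum_prod_type,
      kroneckerMap_apply]
    exact Finset.sum_congr rfl fun j₁ _ => Finset.sum_congr rfl fun j₂ _ =>
      Finset.sum_congr rfl fun j₃ _ => by ring
  -- frobSq as a sum over the flattened index
  have hfrob : ∀ T : Fin n₁ → Fin n₂ → Fin n₃ → ℝ,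
      frobSq T = ∑ p : (Fin n₁ × Fin n₂) × Fin n₃, (T p.1.1 p.1.2 p.2) ^ 2 := by
    intro T
    simp [frobSq, Fintype.sum_prod_type]
  -- the flattened core is P *ᵥ f
  have ha : (fun j : (Fin r₁ × Fin r₂) × Fin r₃ => A j.1.1 j.1.2 j.2) = P *ᵥ f := by
    funext j
    simp only [hA, hP, hf, Matrix.mulVec, dotProduct, Fintype.sum_prod_type,
      kroneckerMap_apply]
  -- normal equations
  have hdet₁ : IsUnit (U₁ᵀ * U₁).det := (Matrix.isUnit_iff_isUnit_det _).mp hU₁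
  have hdet₂ : IsUnit (U₂ᵀ * U₂).det := (Matrix.isUnit_iff_isUnit_det _).mp hU₂
  have hdet₃ : IsUnit (U₃ᵀ * U₃).det := (Matrix.isUnit_iff_isUnit_det _).mp hU₃
  have hMt : Mᵀ = kroneckerMap (· * ·) (kroneckerMap (· * ·) U₁ᵀ U₂ᵀ) U₃ᵀ := by
    rw [hM, ← kroneckerMap_transpose, ← kroneckerMap_transpose]
  have hMMP : Mᵀ * M * P = Mᵀ := by
    rw [hMt, hM, hP, ← Matrix.mul_kronecker_mul, ← Matrix.mul_kronecker_mul,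
      ← Matrix.mul_kronecker_mul, ← Matrix.mul_kronecker_mul,
      Matrix.mul_nonsing_inv_cancel_left _ _ hdet₁,
      Matrix.mul_nonsing_inv_cancel_left _ _ hdet₂,
      Matrix.mul_nonsing_inv_cancel_left _ _ hdet₃]
  have hortho : Mᵀ *ᵥ (M *ᵥ (P *ᵥ f) - f) = 0 := by
    rw [Matrix.mulVec_sub, Matrix.mulVec_mulVec, Matrix.mulVec_mulVec, hMMP]
    simp
  -- conclude
  have key := least_squares_aux M f (P *ᵥ f)
    (fun j : (Fin r₁ × Fin r₂) × Fin r₃ => B j.1.1 j.1.2 j.2) hortho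
  rw [hfrob, hfrob]
  have e1 : ∀ p : (Fin n₁ × Fin n₂) × Fin n₃,
      tucker A U₁ U₂ U₃ p.1.1 p.1.2 p.2 - F p.1.1 p.1.2 p.2
        = (M *ᵥ (P *ᵥ f) - f) p := by
    intro p
    rw [htuck A p, ha]
    simp [hf]
  have e2 : ∀ p : (Fin n₁ × Fin n₂) × Fin n₃,
      tucker B U₁ U₂ U₃ p.1.1 p.1.2 p.2 - F p.1.1 p.1.2 p.2
        = (M *ᵥ (fun j : (Fin r₁ × Fin r₂) × Fin r₃ => B j.1.1 j.1.2 j.2) - f) p := by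
    intro p
    rw [htuck B p]
    simp [hf]
  calc ∑ p : (Fin n₁ × Fin n₂) × Fin n₃,
        (tucker A U₁ U₂ U₃ p.1.1 p.1.2 p.2 - F p.1.1 p.1.2 p.2) ^ 2
      = ∑ p, ((M *ᵥ (P *ᵥ f) - f) p) ^ 2 := by
        exact Finset.sum_congr rfl fun p _ => by rw [e1 p]
    _ ≤ ∑ p, ((M *ᵥ (fun j : (Fin r₁ × Fin r₂) × Fin r₃ => B j.1.1 j.1.2 j.2) - f) p) ^ 2 :=
        key
    _ = ∑ p : (Fin n₁ × Fin n₂) × Fin n₃,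
        (tucker B U₁ U₂ U₃ p.1.1 p.1.2 p.2 - F p.1.1 p.1.2 p.2) ^ 2 := by
        exact Finset.sum_congr rfl fun p _ => by rw [e2 p]
end

section
/- Let F : Fin n₁ → Fin n₂ → Fin n₃ → ℝ and for p = 1,2,3 let Uₚ : Matrix (Fin nₚ) (Fin rₚ) ℝ have invertible Gram matrices Uₚᵀ Uₚ. Let A = F ×₁ U₁† ×₂ U₂† ×₃ U₃† with Uₚ† = (Uₚᵀ Uₚ)⁻¹ Uₚᵀ. Then the residual R = ⟦A;U₁,U₂,U₃⟧ − F is Frobenius-orthogonal to the range of the Tucker map: for every core tensor B : Fin r₁ → Fin r₂ → Fin r₃ → ℝ, Σ_{i₁,i₂,i₃} R(i₁,i₂,i₃) · ⟦B;U₁,U₂,U₃⟧(i₁,i₂,i₃) = 0. -/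
open Matrix BigOperators

lemma flatten3 {n₁ n₂ n₃ : ℕ} (T : Fin n₁ → Fin n₂ → Fin n₃ → ℝ) :
    (∑ i₁, ∑ i₂, ∑ i₃, T i₁ i₂ i₃)
      = ∑ i : Fin n₁ × Fin n₂ × Fin n₃, T i.1 i.2.1 i.2.2 := by
  rw [Fintype.sum_prod_type]
  simp [Fintype.sum_prod_type]

lemma prod_sum2 {α β : Type*} [Fintype α] [Fintype β] (f : α → ℝ) (g : β → ℝ) :
    ∑ i : α × β, f i.1 * g i.2 = (∑ a, f a) * (∑ b, g b) := by
  rw [Fintype.sum_prod_type]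
  simp [← Finset.sum_mul, ← Finset.mul_sum]

lemma prod_sum3 {n₁ n₂ n₃ : ℕ} (g₁ : Fin n₁ → ℝ) (g₂ : Fin n₂ → ℝ) (g₃ : Fin n₃ → ℝ) :
    ∑ i : Fin n₁ × Fin n₂ × Fin n₃, g₁ i.1 * g₂ i.2.1 * g₃ i.2.2
      = (∑ a, g₁ a) * (∑ b, g₂ b) * (∑ c, g₃ c) := by
  have h : ∀ i : Fin n₁ × Fin n₂ × Fin n₃,
      g₁ i.1 * g₂ i.2.1 * g₃ i.2.2 = g₁ i.1 * (fun p : Fin n₂ × Fin n₃ => g₂ p.1 * g₃ p.2) i.2 := by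
    intro i; simp [mul_assoc]
  rw [Finset.sum_congr rfl (fun i _ => h i),
    prod_sum2 g₁ (fun p : Fin n₂ × Fin n₃ => g₂ p.1 * g₃ p.2),
    prod_sum2 g₂ g₃, mul_assoc]

lemma contract {n r : ℕ} (U : Matrix (Fin n) (Fin r) ℝ) (hU : IsUnit (Uᵀ * U)) :
    ∀ (k : Fin r) (i : Fin n), (∑ m, ((Uᵀ * U)⁻¹ * Uᵀ) m i * (Uᵀ * U) m k) = U i k := by
  intro k i
  have hsq : (Uᵀ * U)ᵀ = Uᵀ * U := by rw [Matrix.transpose_mul, Matrix.transpose_transpose]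
  have hsymm : ∀ m, (Uᵀ * U) m k = (Uᵀ * U) k m := by
    intro m
    calc (Uᵀ * U) m k = (Uᵀ * U)ᵀ k m := rfl
      _ = (Uᵀ * U) k m := by rw [hsq]
  calc (∑ m, ((Uᵀ * U)⁻¹ * Uᵀ) m i * (Uᵀ * U) m k)
      = ∑ m, (Uᵀ * U) k m * ((Uᵀ * U)⁻¹ * Uᵀ) m i := by
        refine Finset.sum_congr rfl fun m _ => ?_
        rw [hsymm m, mul_comm]
    _ = ((Uᵀ * U) * ((Uᵀ * U)⁻¹ * Uᵀ)) k i := by rw [Matrix.mul_apply]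
    _ = Uᵀ k i := by
        rw [Matrix.mul_nonsing_inv_cancel_left]
        exact (Matrix.isUnit_iff_isUnit_det _).mp hU
    _ = U i k := rfl

lemma gram_apply {n r : ℕ} (U : Matrix (Fin n) (Fin r) ℝ) (m k : Fin r) :
    (Uᵀ * U) m k = ∑ a, U a m * U a k := by
  simp [Matrix.mul_apply, Matrix.transpose_apply]

theorem tucker_residual_orthogonal
    {r₁ r₂ r₃ n₁ n₂ n₃ : ℕ}
    (F : Fin n₁ → Fin n₂ → Fin n₃ → ℝ)
    (U₁ : Matrix (Fin n₁) (Fin r₁) ℝ)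
    (U₂ : Matrix (Fin n₂) (Fin r₂) ℝ)
    (U₃ : Matrix (Fin n₃) (Fin r₃) ℝ)
    (hU₁ : IsUnit (U₁ᵀ * U₁)) (hU₂ : IsUnit (U₂ᵀ * U₂)) (hU₃ : IsUnit (U₃ᵀ * U₃))
    (A : Fin r₁ → Fin r₂ → Fin r₃ → ℝ)
    (hA : A = fun j₁ j₂ j₃ => ∑ i₁, ∑ i₂, ∑ i₃,
      ((U₁ᵀ * U₁)⁻¹ * U₁ᵀ) j₁ i₁ * ((U₂ᵀ * U₂)⁻¹ * U₂ᵀ) j₂ i₂ *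
        ((U₃ᵀ * U₃)⁻¹ * U₃ᵀ) j₃ i₃ * F i₁ i₂ i₃)
    (R : Fin n₁ → Fin n₂ → Fin n₃ → ℝ)
    (hR : R = fun i₁ i₂ i₃ => tucker A U₁ U₂ U₃ i₁ i₂ i₃ - F i₁ i₂ i₃) :
    ∀ B : Fin r₁ → Fin r₂ → Fin r₃ → ℝ,
      ∑ i₁, ∑ i₂, ∑ i₃, R i₁ i₂ i₃ * tucker B U₁ U₂ U₃ i₁ i₂ i₃ = 0 := by
  intro B
  set P₁ := (U₁ᵀ * U₁)⁻¹ * U₁ᵀ with hP₁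
  set P₂ := (U₂ᵀ * U₂)⁻¹ * U₂ᵀ with hP₂
  set P₃ := (U₃ᵀ * U₃)⁻¹ * U₃ᵀ with hP₃
  -- tucker flattened
  have htuck : ∀ (C : Fin r₁ → Fin r₂ → Fin r₃ → ℝ) (i₁ : Fin n₁) (i₂ : Fin n₂) (i₃ : Fin n₃),
      tucker C U₁ U₂ U₃ i₁ i₂ i₃
        = ∑ m : Fin r₁ × Fin r₂ × Fin r₃,
            C m.1 m.2.1 m.2.2 * U₁ i₁ m.1 * U₂ i₂ m.2.1 * U₃ i₃ m.2.2 := by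
    intro C i₁ i₂ i₃
    exact flatten3 (fun j₁ j₂ j₃ => C j₁ j₂ j₃ * U₁ i₁ j₁ * U₂ i₂ j₂ * U₃ i₃ j₃)
  have hAflat : ∀ (m : Fin r₁ × Fin r₂ × Fin r₃),
      A m.1 m.2.1 m.2.2 = ∑ i : Fin n₁ × Fin n₂ × Fin n₃,
        P₁ m.1 i.1 * P₂ m.2.1 i.2.1 * P₃ m.2.2 i.2.2 * F i.1 i.2.1 i.2.2 := by
    intro m
    rw [hA]
    exact flatten3 _
  -- key: contraction of tucker A against factors equals contraction of F
  have hmain : ∀ (k₁ : Fin r₁) (k₂ : Fin r₂) (k₃ : Fin r₃),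
      (∑ i : Fin n₁ × Fin n₂ × Fin n₃,
        tucker A U₁ U₂ U₃ i.1 i.2.1 i.2.2 * (U₁ i.1 k₁ * U₂ i.2.1 k₂ * U₃ i.2.2 k₃))
      = ∑ i : Fin n₁ × Fin n₂ × Fin n₃,
          F i.1 i.2.1 i.2.2 * (U₁ i.1 k₁ * U₂ i.2.1 k₂ * U₃ i.2.2 k₃) := by
    intro k₁ k₂ k₃
    calc
      (∑ i : Fin n₁ × Fin n₂ × Fin n₃,
        tucker A U₁ U₂ U₃ i.1 i.2.1 i.2.2 * (U₁ i.1 k₁ * U₂ i.2.1 k₂ * U₃ i.2.2 k₃))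
        = ∑ i : Fin n₁ × Fin n₂ × Fin n₃, ∑ m : Fin r₁ × Fin r₂ × Fin r₃,
            A m.1 m.2.1 m.2.2 *
              ((U₁ i.1 m.1 * U₁ i.1 k₁) * (U₂ i.2.1 m.2.1 * U₂ i.2.1 k₂) *
                (U₃ i.2.2 m.2.2 * U₃ i.2.2 k₃)) := by
          refine Finset.sum_congr rfl fun i _ => ?_
          rw [htuck, Finset.sum_mul]
          exact Finset.sum_congr rfl fun m _ => by ring
      _ = ∑ m : Fin r₁ × Fin r₂ × Fin r₃, ∑ i : Fin n₁ × Fin n₂ × Fin n₃,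
            A m.1 m.2.1 m.2.2 *
              ((U₁ i.1 m.1 * U₁ i.1 k₁) * (U₂ i.2.1 m.2.1 * U₂ i.2.1 k₂) *
                (U₃ i.2.2 m.2.2 * U₃ i.2.2 k₃)) := Finset.sum_comm
      _ = ∑ m : Fin r₁ × Fin r₂ × Fin r₃,
            A m.1 m.2.1 m.2.2 *
              ((U₁ᵀ * U₁) m.1 k₁ * (U₂ᵀ * U₂) m.2.1 k₂ * (U₃ᵀ * U₃) m.2.2 k₃) := by
          refine Finset.sum_congr rfl fun m _ => ?_
          rw [← Finset.mul_sum]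
          congr 1
          rw [prod_sum3 (fun a => U₁ a m.1 * U₁ a k₁) (fun b => U₂ b m.2.1 * U₂ b k₂)
            (fun c => U₃ c m.2.2 * U₃ c k₃), gram_apply, gram_apply, gram_apply]
      _ = ∑ m : Fin r₁ × Fin r₂ × Fin r₃, ∑ i : Fin n₁ × Fin n₂ × Fin n₃,
            F i.1 i.2.1 i.2.2 *
              ((P₁ m.1 i.1 * (U₁ᵀ * U₁) m.1 k₁) * (P₂ m.2.1 i.2.1 * (U₂ᵀ * U₂) m.2.1 k₂) *
                (P₃ m.2.2 i.2.2 * (U₃ᵀ * U₃) m.2.2 k₃)) := by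
          refine Finset.sum_congr rfl fun m _ => ?_
          rw [hAflat m, Finset.sum_mul]
          exact Finset.sum_congr rfl fun i _ => by ring
      _ = ∑ i : Fin n₁ × Fin n₂ × Fin n₃, ∑ m : Fin r₁ × Fin r₂ × Fin r₃,
            F i.1 i.2.1 i.2.2 *
              ((P₁ m.1 i.1 * (U₁ᵀ * U₁) m.1 k₁) * (P₂ m.2.1 i.2.1 * (U₂ᵀ * U₂) m.2.1 k₂) *
                (P₃ m.2.2 i.2.2 * (U₃ᵀ * U₃) m.2.2 k₃)) := Finset.sum_comm
      _ = ∑ i : Fin n₁ × Fin n₂ × Fin n₃,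
            F i.1 i.2.1 i.2.2 * (U₁ i.1 k₁ * U₂ i.2.1 k₂ * U₃ i.2.2 k₃) := by
          refine Finset.sum_congr rfl fun i _ => ?_
          rw [← Finset.mul_sum]
          congr 1
          rw [prod_sum3 (fun a => P₁ a i.1 * (U₁ᵀ * U₁) a k₁)
            (fun b => P₂ b i.2.1 * (U₂ᵀ * U₂) b k₂)
            (fun c => P₃ c i.2.2 * (U₃ᵀ * U₃) c k₃),
            contract U₁ hU₁ k₁ i.1, contract U₂ hU₂ k₂ i.2.1, contract U₃ hU₃ k₃ i.2.2]
  -- assemble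
  rw [flatten3 (fun i₁ i₂ i₃ => R i₁ i₂ i₃ * tucker B U₁ U₂ U₃ i₁ i₂ i₃)]
  calc
    (∑ i : Fin n₁ × Fin n₂ × Fin n₃, R i.1 i.2.1 i.2.2 * tucker B U₁ U₂ U₃ i.1 i.2.1 i.2.2)
      = ∑ i : Fin n₁ × Fin n₂ × Fin n₃, ∑ k : Fin r₁ × Fin r₂ × Fin r₃,
          B k.1 k.2.1 k.2.2 *
            (R i.1 i.2.1 i.2.2 * (U₁ i.1 k.1 * U₂ i.2.1 k.2.1 * U₃ i.2.2 k.2.2)) := by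
        refine Finset.sum_congr rfl fun i _ => ?_
        rw [htuck, Finset.mul_sum]
        exact Finset.sum_congr rfl fun k _ => by ring
    _ = ∑ k : Fin r₁ × Fin r₂ × Fin r₃, B k.1 k.2.1 k.2.2 *
          ∑ i : Fin n₁ × Fin n₂ × Fin n₃,
            R i.1 i.2.1 i.2.2 * (U₁ i.1 k.1 * U₂ i.2.1 k.2.1 * U₃ i.2.2 k.2.2) := by
        rw [Finset.sum_comm]
        exact Finset.sum_congr rfl fun k _ => by rw [Finset.mul_sum]
    _ = 0 := by
        refine Finset.sum_eq_zero fun k _ => ?_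
        have : (∑ i : Fin n₁ × Fin n₂ × Fin n₃,
            R i.1 i.2.1 i.2.2 * (U₁ i.1 k.1 * U₂ i.2.1 k.2.1 * U₃ i.2.2 k.2.2)) = 0 := by
          have hsub : ∀ i : Fin n₁ × Fin n₂ × Fin n₃,
              R i.1 i.2.1 i.2.2 * (U₁ i.1 k.1 * U₂ i.2.1 k.2.1 * U₃ i.2.2 k.2.2)
              = tucker A U₁ U₂ U₃ i.1 i.2.1 i.2.2 * (U₁ i.1 k.1 * U₂ i.2.1 k.2.1 * U₃ i.2.2 k.2.2)
                - F i.1 i.2.1 i.2.2 * (U₁ i.1 k.1 * U₂ i.2.1 k.2.1 * U₃ i.2.2 k.2.2) := by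
            intro i; rw [hR]; ring
          rw [Finset.sum_congr rfl fun i _ => hsub i, Finset.sum_sub_distrib,
            hmain k.1 k.2.1 k.2.2, sub_self]
        rw [this, mul_zero]
end

section
/- Let Uₚ : Matrix (Fin nₚ) (Fin rₚ) ℝ have invertible Gram matrices Uₚᵀ Uₚ and set Uₚ† = (UₚᵀUₚ)⁻¹Uₚᵀ. Suppose F : Fin n₁ → Fin n₂ → Fin n₃ → ℝ is a sum of two Tucker tensors, F = ⟦B;V₁,V₂,V₃⟧ + ⟦C;W₁,W₂,W₃⟧, with cores B : Fin r₁′ → Fin r₂′ → Fin r₃′ → ℝ, C : Fin r₁″ → Fin r₂″ → Fin r₃″ → ℝ and factor matrices Vₚ : Matrix (Fin nₚ) (Fin rₚ′) ℝ, Wₚ : Matrix (Fin nₚ) (Fin rₚ″) ℝ. Then the core tensor A = B ×₁ (U₁†V₁) ×₂ (U₂†V₂) ×₃ (U₃†V₃) + C ×₁ (U₁†W₁) ×₂ (U₂†W₂) ×₃ (U₃†W₃) is a global minimizer over core tensors of the map B′ ↦ ‖⟦B′;U₁,U₂,U₃⟧ − F‖_F². -/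
open Matrix BigOperators

lemma sum3 {α β γ : Type*} [Fintype α] [Fintype β] [Fintype γ]
    (f : α → ℝ) (g : β → ℝ) (h : γ → ℝ) :
    ∑ x : α × β × γ, f x.1 * g x.2.1 * h x.2.2
      = (∑ a, f a) * (∑ b, g b) * (∑ c, h c) := by
  rw [Fintype.sum_prod_type]
  have key : ∀ a : α, ∑ x : β × γ, f a * g x.1 * h x.2
      = f a * ((∑ b, g b) * (∑ c, h c)) := by
    intro a
    rw [Fintype.sum_prod_type, Finset.sum_mul_sum]
    simp_rw [Finset.mul_sum]
    apply Finset.sum_congr rfl; intros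
    apply Finset.sum_congr rfl; intros
    ring
  calc ∑ a : α, ∑ x : β × γ, f a * g x.1 * h x.2
      = ∑ a : α, f a * ((∑ b, g b) * (∑ c, h c)) := by
        exact Finset.sum_congr rfl fun a _ => key a
    _ = (∑ a, f a) * (∑ b, g b) * (∑ c, h c) := by
        rw [← Finset.sum_mul]; ring

def kron3 {ι₁ ι₂ ι₃ κ₁ κ₂ κ₃ : Type*}
    (M₁ : Matrix ι₁ κ₁ ℝ) (M₂ : Matrix ι₂ κ₂ ℝ) (M₃ : Matrix ι₃ κ₃ ℝ) :
    Matrix (ι₁ × ι₂ × ι₃) (κ₁ × κ₂ × κ₃) ℝ :=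
  Matrix.of fun i j => M₁ i.1 j.1 * M₂ i.2.1 j.2.1 * M₃ i.2.2 j.2.2

lemma kron3_mul {ι₁ ι₂ ι₃ κ₁ κ₂ κ₃ μ₁ μ₂ μ₃ : Type*}
    [Fintype κ₁] [Fintype κ₂] [Fintype κ₃]
    (A₁ : Matrix ι₁ κ₁ ℝ) (A₂ : Matrix ι₂ κ₂ ℝ) (A₃ : Matrix ι₃ κ₃ ℝ)
    (B₁ : Matrix κ₁ μ₁ ℝ) (B₂ : Matrix κ₂ μ₂ ℝ) (B₃ : Matrix κ₃ μ₃ ℝ) :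
    kron3 A₁ A₂ A₃ * kron3 B₁ B₂ B₃ = kron3 (A₁ * B₁) (A₂ * B₂) (A₃ * B₃) := by
  ext i j
  simp only [Matrix.mul_apply, kron3, Matrix.of_apply]
  rw [← sum3 (fun k => A₁ i.1 k * B₁ k j.1) (fun k => A₂ i.2.1 k * B₂ k j.2.1)
      (fun k => A₃ i.2.2 k * B₃ k j.2.2)]
  apply Finset.sum_congr rfl; intros
  ring

lemma kron3_transpose {ι₁ ι₂ ι₃ κ₁ κ₂ κ₃ : Type*}
    (M₁ : Matrix ι₁ κ₁ ℝ) (M₂ : Matrix ι₂ κ₂ ℝ) (M₃ : Matrix ι₃ κ₃ ℝ) :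
    (kron3 M₁ M₂ M₃)ᵀ = kron3 M₁ᵀ M₂ᵀ M₃ᵀ := by
  ext i j; rfl

def vec3 {n₁ n₂ n₃ : ℕ} (T : Fin n₁ → Fin n₂ → Fin n₃ → ℝ) :
    Fin n₁ × Fin n₂ × Fin n₃ → ℝ := fun i => T i.1 i.2.1 i.2.2

lemma vec3_tucker {n₁ n₂ n₃ r₁ r₂ r₃ : ℕ}
    (A : Fin r₁ → Fin r₂ → Fin r₃ → ℝ)
    (U₁ : Matrix (Fin n₁) (Fin r₁) ℝ) (U₂ : Matrix (Fin n₂) (Fin r₂) ℝ)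
    (U₃ : Matrix (Fin n₃) (Fin r₃) ℝ) :
    vec3 (tucker A U₁ U₂ U₃) = kron3 U₁ U₂ U₃ *ᵥ vec3 A := by
  funext i
  simp only [vec3, tucker, Matrix.mulVec, dotProduct, kron3, Matrix.of_apply,
    Fintype.sum_prod_type]
  apply Finset.sum_congr rfl; intros
  apply Finset.sum_congr rfl; intros
  apply Finset.sum_congr rfl; intros
  ring

lemma frobSq_eq {n₁ n₂ n₃ : ℕ} (T : Fin n₁ → Fin n₂ → Fin n₃ → ℝ) :
    frobSq T = ∑ i, (vec3 T i) ^ 2 := by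
  simp [frobSq, vec3, Fintype.sum_prod_type]

lemma lsq {ι κ : Type*} [Fintype ι] [Fintype κ]
    (K : Matrix ι κ ℝ) (f : ι → ℝ) (a : κ → ℝ)
    (h : Kᵀ *ᵥ (K *ᵥ a - f) = 0) (b : κ → ℝ) :
    ∑ i, ((K *ᵥ a - f) i) ^ 2 ≤ ∑ i, ((K *ᵥ b - f) i) ^ 2 := by
  have key : ∀ i, (K *ᵥ b - f) i = (K *ᵥ (b - a)) i + (K *ᵥ a - f) i := by
    intro i; simp [Matrix.mulVec_sub]
  have h' : ∀ j, ∑ i, K i j * (K *ᵥ a - f) i = 0 := by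
    intro j
    have := congrFun h j
    simpa [Matrix.mulVec, dotProduct, Matrix.transpose_apply] using this
  have orth : ∑ i, (K *ᵥ (b - a)) i * (K *ᵥ a - f) i = 0 := by
    calc ∑ i, (K *ᵥ (b - a)) i * (K *ᵥ a - f) i
        = ∑ i, ∑ j, K i j * (b - a) j * (K *ᵥ a - f) i := by
          apply Finset.sum_congr rfl; intro i _
          simp [Matrix.mulVec, dotProduct, Finset.sum_mul]
      _ = ∑ j, ∑ i, K i j * (b - a) j * (K *ᵥ a - f) i := Finset.sum_comm
      _ = ∑ j, (b - a) j * ∑ i, K i j * (K *ᵥ a - f) i := by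
          apply Finset.sum_congr rfl; intro j _
          rw [Finset.mul_sum]
          apply Finset.sum_congr rfl; intros; ring
      _ = 0 := Finset.sum_eq_zero fun j _ => by rw [h' j, mul_zero]
  calc ∑ i, ((K *ᵥ a - f) i) ^ 2
      ≤ ∑ i, ((K *ᵥ (b - a)) i) ^ 2 + (2 * ∑ i, (K *ᵥ (b - a)) i * (K *ᵥ a - f) i)
          + ∑ i, ((K *ᵥ a - f) i) ^ 2 := by
        rw [orth]
        have : (0:ℝ) ≤ ∑ i, ((K *ᵥ (b - a)) i) ^ 2 :=
          Finset.sum_nonneg fun i _ => sq_nonneg _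
        linarith
    _ = ∑ i, ((K *ᵥ b - f) i) ^ 2 := by
        simp_rw [key, add_sq]
        rw [Finset.sum_add_distrib, Finset.sum_add_distrib, Finset.mul_sum]
        ring

theorem tucker_fit_of_sum_of_tucker_tensors
    {r₁ r₂ r₃ r₁' r₂' r₃' r₁'' r₂'' r₃'' n₁ n₂ n₃ : ℕ}
    (U₁ : Matrix (Fin n₁) (Fin r₁) ℝ)
    (U₂ : Matrix (Fin n₂) (Fin r₂) ℝ)
    (U₃ : Matrix (Fin n₃) (Fin r₃) ℝ)
    (hU₁ : IsUnit (U₁ᵀ * U₁)) (hU₂ : IsUnit (U₂ᵀ * U₂)) (hU₃ : IsUnit (U₃ᵀ * U₃))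
    (B : Fin r₁' → Fin r₂' → Fin r₃' → ℝ)
    (C : Fin r₁'' → Fin r₂'' → Fin r₃'' → ℝ)
    (V₁ : Matrix (Fin n₁) (Fin r₁') ℝ)
    (V₂ : Matrix (Fin n₂) (Fin r₂') ℝ)
    (V₃ : Matrix (Fin n₃) (Fin r₃') ℝ)
    (W₁ : Matrix (Fin n₁) (Fin r₁'') ℝ)
    (W₂ : Matrix (Fin n₂) (Fin r₂'') ℝ)
    (W₃ : Matrix (Fin n₃) (Fin r₃'') ℝ)
    (F : Fin n₁ → Fin n₂ → Fin n₃ → ℝ)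
    (hF : F = fun i₁ i₂ i₃ =>
      tucker B V₁ V₂ V₃ i₁ i₂ i₃ + tucker C W₁ W₂ W₃ i₁ i₂ i₃)
    (A : Fin r₁ → Fin r₂ → Fin r₃ → ℝ)
    (hA : A = fun j₁ j₂ j₃ =>
      (∑ l₁, ∑ l₂, ∑ l₃,
        ((U₁ᵀ * U₁)⁻¹ * U₁ᵀ * V₁) j₁ l₁ * ((U₂ᵀ * U₂)⁻¹ * U₂ᵀ * V₂) j₂ l₂ *
          ((U₃ᵀ * U₃)⁻¹ * U₃ᵀ * V₃) j₃ l₃ * B l₁ l₂ l₃) +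
      (∑ l₁, ∑ l₂, ∑ l₃,
        ((U₁ᵀ * U₁)⁻¹ * U₁ᵀ * W₁) j₁ l₁ * ((U₂ᵀ * U₂)⁻¹ * U₂ᵀ * W₂) j₂ l₂ *
          ((U₃ᵀ * U₃)⁻¹ * U₃ᵀ * W₃) j₃ l₃ * C l₁ l₂ l₃)) :
    ∀ B' : Fin r₁ → Fin r₂ → Fin r₃ → ℝ,
      frobSq (fun i₁ i₂ i₃ => tucker A U₁ U₂ U₃ i₁ i₂ i₃ - F i₁ i₂ i₃) ≤
        frobSq (fun i₁ i₂ i₃ => tucker B' U₁ U₂ U₃ i₁ i₂ i₃ - F i₁ i₂ i₃) := by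
  intro B'
  have hd₁ : (U₁ᵀ * U₁) * (U₁ᵀ * U₁)⁻¹ = 1 :=
    Matrix.mul_nonsing_inv _ ((Matrix.isUnit_iff_isUnit_det _).mp hU₁)
  have hd₂ : (U₂ᵀ * U₂) * (U₂ᵀ * U₂)⁻¹ = 1 :=
    Matrix.mul_nonsing_inv _ ((Matrix.isUnit_iff_isUnit_det _).mp hU₂)
  have hd₃ : (U₃ᵀ * U₃) * (U₃ᵀ * U₃)⁻¹ = 1 :=
    Matrix.mul_nonsing_inv _ ((Matrix.isUnit_iff_isUnit_det _).mp hU₃)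
  have hvF : vec3 F = kron3 V₁ V₂ V₃ *ᵥ vec3 B + kron3 W₁ W₂ W₃ *ᵥ vec3 C := by
    funext i
    simp only [hF, vec3, Pi.add_apply]
    rw [← congrFun (vec3_tucker B V₁ V₂ V₃) i, ← congrFun (vec3_tucker C W₁ W₂ W₃) i]
    rfl
  have hvA : vec3 A =
      kron3 ((U₁ᵀ * U₁)⁻¹ * U₁ᵀ * V₁) ((U₂ᵀ * U₂)⁻¹ * U₂ᵀ * V₂) ((U₃ᵀ * U₃)⁻¹ * U₃ᵀ * V₃)
        *ᵥ vec3 B +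
      kron3 ((U₁ᵀ * U₁)⁻¹ * U₁ᵀ * W₁) ((U₂ᵀ * U₂)⁻¹ * U₂ᵀ * W₂) ((U₃ᵀ * U₃)⁻¹ * U₃ᵀ * W₃)
        *ᵥ vec3 C := by
    funext i
    simp only [vec3, hA, Pi.add_apply, Matrix.mulVec, dotProduct, kron3,
      Matrix.of_apply, Fintype.sum_prod_type]
  have e₁ : (U₁ᵀ * U₁) * ((U₁ᵀ * U₁)⁻¹ * U₁ᵀ * V₁) = U₁ᵀ * V₁ := by
    rw [← Matrix.mul_assoc, ← Matrix.mul_assoc, hd₁, Matrix.one_mul]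
  have e₂ : (U₂ᵀ * U₂) * ((U₂ᵀ * U₂)⁻¹ * U₂ᵀ * V₂) = U₂ᵀ * V₂ := by
    rw [← Matrix.mul_assoc, ← Matrix.mul_assoc, hd₂, Matrix.one_mul]
  have e₃ : (U₃ᵀ * U₃) * ((U₃ᵀ * U₃)⁻¹ * U₃ᵀ * V₃) = U₃ᵀ * V₃ := by
    rw [← Matrix.mul_assoc, ← Matrix.mul_assoc, hd₃, Matrix.one_mul]
  have f₁ : (U₁ᵀ * U₁) * ((U₁ᵀ * U₁)⁻¹ * U₁ᵀ * W₁) = U₁ᵀ * W₁ := by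
    rw [← Matrix.mul_assoc, ← Matrix.mul_assoc, hd₁, Matrix.one_mul]
  have f₂ : (U₂ᵀ * U₂) * ((U₂ᵀ * U₂)⁻¹ * U₂ᵀ * W₂) = U₂ᵀ * W₂ := by
    rw [← Matrix.mul_assoc, ← Matrix.mul_assoc, hd₂, Matrix.one_mul]
  have f₃ : (U₃ᵀ * U₃) * ((U₃ᵀ * U₃)⁻¹ * U₃ᵀ * W₃) = U₃ᵀ * W₃ := by
    rw [← Matrix.mul_assoc, ← Matrix.mul_assoc, hd₃, Matrix.one_mul]
  have hnorm : (kron3 U₁ U₂ U₃)ᵀ *ᵥ (kron3 U₁ U₂ U₃ *ᵥ vec3 A - vec3 F) = 0 := by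
    rw [Matrix.mulVec_sub, kron3_transpose, Matrix.mulVec_mulVec, kron3_mul, hvA, hvF,
      Matrix.mulVec_add, Matrix.mulVec_add, Matrix.mulVec_mulVec, Matrix.mulVec_mulVec,
      Matrix.mulVec_mulVec, Matrix.mulVec_mulVec, kron3_mul, kron3_mul, kron3_mul, kron3_mul,
      e₁, e₂, e₃, f₁, f₂, f₃, sub_self]
  have hsub : ∀ X : Fin r₁ → Fin r₂ → Fin r₃ → ℝ,
      vec3 (fun i₁ i₂ i₃ => tucker X U₁ U₂ U₃ i₁ i₂ i₃ - F i₁ i₂ i₃)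
        = kron3 U₁ U₂ U₃ *ᵥ vec3 X - vec3 F := by
    intro X
    funext i
    have h1 := congrFun (vec3_tucker X U₁ U₂ U₃) i
    simp only [vec3] at h1 ⊢
    rw [Pi.sub_apply, ← h1]
    rfl
  rw [frobSq_eq, frobSq_eq, hsub, hsub]
  exact lsq _ _ _ hnorm (vec3 B')
end

section
/- Let Ω ⊆ EuclideanSpace ℝ (Fin 3) be a bounded measurable set, let m : EuclideanSpace ℝ (Fin 3) → ℝ be measurable with |m| ≤ M on Ω, let ε, δ, η > 0 with ε < 1 ≤ δ, and let k_GS(r) = Σ_{s∈S} ω s · r² · exp(−(α s)·r²) with α s ≥ 0 be a Gaussian-sum kernel satisfying |r − k_GS(r)| ≤ η for all r ∈ (ε, δ]. Let x ∈ EuclideanSpace ℝ (Fin 3) be such that ‖x − y‖ ≤ δ for all y ∈ Ω. Then there exists a constant C > 0 depending only on M, ω, α (not on ε, η, x) such that |∫_Ω ‖x−y‖ m(y) dy − ∫_Ω k_GS(‖x−y‖) m(y) dy| ≤ C ε⁴ + η · M · (Lebesgue measure of Ω). -/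
/-! Split `Ω` at the closed ball of radius `ε` around `x`. Outside the ball the integrand
`(‖x - y‖ - k_GS ‖x - y‖) m y` is at most `η M` by the approximation hypothesis. Inside it,
`‖x - y‖ ≤ ε` and, since every Gaussian factor is at most `1`, `|k_GS r| ≤ (∑ |ω s|) r² ≤ (∑ |ω s|) ε`;
as the ball has volume `(4π/3) ε³`, this part contributes `O(ε⁴)`. -/

open MeasureTheory BigOperators

section GaussianSumKernel

variable {S : Type*} [Fintype S] (ω α : S → ℝ)

noncomputable def gaussianSumKernel (r : ℝ) : ℝ :=
  ∑ s, ω s * r ^ 2 * Real.exp (-(α s) * r ^ 2)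

theorem continuous_gaussianSumKernel : Continuous (gaussianSumKernel ω α) := by
  unfold gaussianSumKernel
  fun_prop

variable {α}

theorem abs_gaussianSumKernel_le (hα : ∀ s, 0 ≤ α s) (r : ℝ) :
    |gaussianSumKernel ω α r| ≤ (∑ s, |ω s|) * r ^ 2 := by
  rw [Finset.sum_mul]
  refine (Finset.abs_sum_le_sum_abs _ _).trans (Finset.sum_le_sum fun s _ => ?_)
  have hexp : Real.exp (-(α s) * r ^ 2) ≤ 1 :=
    Real.exp_le_one_iff.2 (by nlinarith [hα s, sq_nonneg r])
  rw [abs_mul, abs_mul, abs_of_nonneg (sq_nonneg r), Real.abs_exp]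
  exact mul_le_of_le_one_right (by positivity) hexp

theorem abs_sub_gaussianSumKernel_le (hα : ∀ s, 0 ≤ α s) {r ε : ℝ} (hr : 0 ≤ r) (hrε : r ≤ ε)
    (hε : ε ≤ 1) : |r - gaussianSumKernel ω α r| ≤ (1 + ∑ s, |ω s|) * ε := by
  have hW : 0 ≤ ∑ s, |ω s| := Finset.sum_nonneg fun s _ => abs_nonneg _
  have hr2 : r ^ 2 ≤ ε := by nlinarith
  calc |r - gaussianSumKernel ω α r| ≤ |r| + |gaussianSumKernel ω α r| := abs_sub _ _
    _ ≤ ε + (∑ s, |ω s|) * ε := by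
        rw [abs_of_nonneg hr]
        gcongr
        exact (abs_gaussianSumKernel_le ω hα r).trans (by gcongr)
    _ = (1 + ∑ s, |ω s|) * ε := by ring

end GaussianSumKernel

theorem abs_setIntegral_mul_le_of_inter_diff {X : Type*} [MeasurableSpace X] {μ : Measure X}
    {Ω B : Set X} {f m : X → ℝ} {a b M : ℝ}
    (hfm : IntegrableOn (fun y => f y * m y) Ω μ) (hB : MeasurableSet B)
    (hΩ : μ Ω ≠ ⊤) (hBfin : μ B ≠ ⊤) (ha : 0 ≤ a) (hb : 0 ≤ b) (hM0 : 0 ≤ M)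
    (hM : ∀ y ∈ Ω, |m y| ≤ M) (hnear : ∀ y ∈ Ω ∩ B, |f y| ≤ a)
    (hfar : ∀ y ∈ Ω \ B, |f y| ≤ b) :
    |∫ y in Ω, f y * m y ∂μ| ≤ a * M * μ.real B + b * M * μ.real Ω := by
  have hbound : ∀ (T : Set X) (c : ℝ), 0 ≤ c → T ⊆ Ω → (∀ y ∈ T, |f y| ≤ c) →
      |∫ y in T, f y * m y ∂μ| ≤ c * M * μ.real T := fun T c hc hTΩ hf =>
    norm_setIntegral_le_of_norm_le_const ((measure_mono hTΩ).trans_lt hΩ.lt_top) fun y hy =>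
      (Real.norm_eq_abs _).trans_le <| (abs_mul _ _).trans_le <|
        mul_le_mul (hf y hy) (hM y (hTΩ hy)) (abs_nonneg _) hc
  rw [← integral_inter_add_sdiff hB hfm]
  calc |(∫ y in Ω ∩ B, f y * m y ∂μ) + ∫ y in Ω \ B, f y * m y ∂μ|
      ≤ a * M * μ.real (Ω ∩ B) + b * M * μ.real (Ω \ B) :=
        (abs_add_le _ _).trans (add_le_add (hbound _ a ha Set.inter_subset_left hnear)
          (hbound _ b hb Set.sdiff_subset hfar))
    _ ≤ a * M * μ.real B + b * M * μ.real Ω := by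
        gcongr
        · exact Set.inter_subset_right
        · exact Set.sdiff_subset

theorem integrableOn_mul_of_isBounded {E : Type*} [NormedAddCommGroup E] [ProperSpace E]
    [MeasurableSpace E] [OpensMeasurableSpace E] {μ : Measure E} [IsFiniteMeasureOnCompacts μ]
    {Ω : Set E} (hΩb : Bornology.IsBounded Ω) (hΩm : MeasurableSet Ω) {g m : E → ℝ} {M : ℝ}
    (hg : Continuous g) (hm : Measurable m) (hM : ∀ y ∈ Ω, |m y| ≤ M) :
    IntegrableOn (fun y => g y * m y) Ω μ :=
  (Measure.integrableOn_of_bounded hΩb.measure_lt_top.ne hm.aestronglyMeasurable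
    (ae_restrict_of_forall_mem hΩm hM)).continuousOn_mul_of_subset hg.continuousOn
    hΩb.isCompact_closure hΩm subset_closure

theorem volume_real_closedBall_fin_three (x : EuclideanSpace ℝ (Fin 3)) {r : ℝ} (hr : 0 ≤ r) :
    volume.real (Metric.closedBall x r) = r ^ 3 * (Real.pi * 4 / 3) := by
  rw [measureReal_def, EuclideanSpace.volume_closedBall_fin_three, ENNReal.toReal_mul,
    ENNReal.toReal_pow, ENNReal.toReal_ofReal hr, ENNReal.toReal_ofReal (by positivity)]

theorem superpotential_gaussian_sum_kernel_replacement_error_general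
    (Ω : Set (EuclideanSpace ℝ (Fin 3)))
    (hΩb : Bornology.IsBounded Ω) (hΩm : MeasurableSet Ω)
    (m : EuclideanSpace ℝ (Fin 3) → ℝ) (hm : Measurable m)
    (M : ℝ) (hM : ∀ y ∈ Ω, |m y| ≤ M)
    (δ : ℝ)
    {S : Type*} [Fintype S] (ω α : S → ℝ) (hα : ∀ s, 0 ≤ α s)
    (kGS : ℝ → ℝ)
    (hk : ∀ r : ℝ, 0 ≤ r → kGS r = ∑ s, ω s * r ^ 2 * Real.exp (-(α s) * r ^ 2)) :
    ∃ C > 0, ∀ (ε η : ℝ) (x : EuclideanSpace ℝ (Fin 3)),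
      0 < ε → ε < 1 → 0 < η →
      (∀ r : ℝ, ε < r → r ≤ δ → |r - kGS r| ≤ η) →
      (∀ y ∈ Ω, ‖x - y‖ ≤ δ) →
      |(∫ y in Ω, ‖x - y‖ * m y) - ∫ y in Ω, kGS ‖x - y‖ * m y| ≤
        C * ε ^ 4 + η * M * (volume Ω).toReal := by
  rcases Ω.eq_empty_or_nonempty with rfl | ⟨y₀, hy₀⟩
  · exact ⟨1, one_pos, fun ε η x hε _ _ _ _ => by simpa using (pow_pos hε 4).le⟩
  have hM0 : 0 ≤ M := (abs_nonneg _).trans (hM y₀ hy₀)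
  set W := ∑ s, |ω s|
  refine ⟨(1 + W) * M * (Real.pi * 4 / 3) + 1, by positivity,
    fun ε η x hε hε1 hη hηk hxδ => ?_⟩
  have hint : ∀ φ : ℝ → ℝ, Continuous φ → IntegrableOn (fun y => φ ‖x - y‖ * m y) Ω :=
    fun φ hφ => integrableOn_mul_of_isBounded hΩb hΩm (by fun_prop) hm hM
  have hkx : ∀ y, kGS ‖x - y‖ = gaussianSumKernel ω α ‖x - y‖ := fun y => hk _ (norm_nonneg _)
  have hnear : ∀ y ∈ Ω ∩ Metric.closedBall x ε,
      |‖x - y‖ - gaussianSumKernel ω α ‖x - y‖| ≤ (1 + W) * ε := fun y ⟨_, hy⟩ =>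
    abs_sub_gaussianSumKernel_le ω hα (norm_nonneg _)
      ((dist_eq_norm x y).symm.trans_le (Metric.mem_closedBall'.1 hy)) hε1.le
  have hfar : ∀ y ∈ Ω \ Metric.closedBall x ε,
      |‖x - y‖ - gaussianSumKernel ω α ‖x - y‖| ≤ η := fun y ⟨hyΩ, hy⟩ =>
    hkx y ▸ hηk _ (dist_eq_norm x y ▸ not_le.1 (mt Metric.mem_closedBall'.2 hy)) (hxδ y hyΩ)
  have hsplit := abs_setIntegral_mul_le_of_inter_diff
    (hint (fun r => r - gaussianSumKernel ω α r)
      (continuous_id.sub (continuous_gaussianSumKernel ω α)))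
    Metric.isClosed_closedBall.measurableSet hΩb.measure_lt_top.ne measure_closedBall_lt_top.ne
    (by positivity) hη.le hM0 hM hnear hfar
  rw [volume_real_closedBall_fin_three x hε.le] at hsplit
  simp only [hkx]
  rw [← integral_sub (f := fun y => ‖x - y‖ * m y) (hint _ continuous_id)
    (hint _ (continuous_gaussianSumKernel ω α))]
  simp only [← sub_mul]
  refine hsplit.trans (add_le_add_left ?_ _)
  nlinarith [pow_pos hε 4]

theorem superpotential_gaussian_sum_kernel_replacement_error
    (Ω : Set (EuclideanSpace ℝ (Fin 3)))
    (hΩb : Bornology.IsBounded Ω) (hΩm : MeasurableSet Ω)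
    (m : EuclideanSpace ℝ (Fin 3) → ℝ) (hm : Measurable m)
    (M : ℝ) (hM : ∀ y ∈ Ω, |m y| ≤ M)
    (δ : ℝ) (hδ : 1 ≤ δ)
    {S : Type*} [Fintype S] (ω α : S → ℝ) (hα : ∀ s, 0 ≤ α s)
    (kGS : ℝ → ℝ)
    (hk : ∀ r : ℝ, 0 ≤ r → kGS r = ∑ s, ω s * r ^ 2 * Real.exp (-(α s) * r ^ 2)) :
    ∃ C > 0, ∀ (ε η : ℝ) (x : EuclideanSpace ℝ (Fin 3)),
      0 < ε → ε < 1 → 0 < η →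
      (∀ r : ℝ, ε < r → r ≤ δ → |r - kGS r| ≤ η) →
      (∀ y ∈ Ω, ‖x - y‖ ≤ δ) →
      |(∫ y in Ω, ‖x - y‖ * m y) - ∫ y in Ω, kGS ‖x - y‖ * m y| ≤
        C * ε ^ 4 + η * M * (volume Ω).toReal :=
  superpotential_gaussian_sum_kernel_replacement_error_general Ω hΩb hΩm m hm M hM δ ω α hα kGS hk
end

section
/- Let Ω ⊆ EuclideanSpace ℝ (Fin 3) be a compact set and ρ : EuclideanSpace ℝ (Fin 3) → ℝ a bounded measurable function vanishing outside Ω. Define the super-potential u_ρ(x) = (1/8π) ∫_Ω ‖x−y‖ ρ(y) dy. Then for every x ∉ Ω, u_ρ is twice differentiable at x and its Laplacian satisfies Δu_ρ(x) = (1/4π) ∫_Ω ρ(y)/‖x−y‖ dy; equivalently, −Δu_ρ(x) = N_ρ(x), where N_ρ(x) = −(1/4π) ∫_Ω ρ(y)/‖x−y‖ dy is the Newton potential of ρ. -/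
open MeasureTheory BigOperators Real

/-- The Laplacian of `f : ℝ³ → ℝ` at `x`, as the sum of second partial derivatives
along the standard coordinate directions. -/
noncomputable def lap (f : EuclideanSpace ℝ (Fin 3) → ℝ) (x : EuclideanSpace ℝ (Fin 3)) : ℝ :=
  ∑ i : Fin 3,
    fderiv ℝ (fun y => fderiv ℝ f y (EuclideanSpace.single i (1 : ℝ))) x
      (EuclideanSpace.single i (1 : ℝ))

/-!
For `x ∉ Ω` and `z` in a small ball around `x`, the differences `z - y`, `y ∈ Ω`, stay in a
compact set avoiding `0`, on which the kernel `‖·‖` and its first two derivatives are bounded;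
so `u` can be differentiated twice under the integral sign and `Δu(x) = (1/8π) ∫ ρ(y) Δ‖·‖(x - y)`.
The Hessian of the norm at `z ≠ 0` is `(I - ẑ ẑᵀ) / ‖z‖`, whose trace in `ℝ³` is `2 / ‖z‖`.
-/

open Metric Topology Filter Set

section ParametricIntegral

universe u

-- `E` and `F` share a universe so that the induction in `contDiffOn_setIntegral_smul_comp_sub`
-- can pass from `F` to `E →L[ℝ] F`.
variable {E F : Type u} [NormedAddCommGroup E] [ProperSpace E] [NormedAddCommGroup F]
  {Ω U : Set E}

theorem IsCompact.exists_ball_sub_subset_isCompact (hΩ : IsCompact Ω) (hU : IsOpen U) {z₀ : E}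
    (hz₀ : ∀ y ∈ Ω, z₀ - y ∈ U) :
    ∃ δ > 0, ∃ C ⊆ U, IsCompact C ∧ ∀ z ∈ ball z₀ δ, ∀ y ∈ Ω, z - y ∈ C := by
  have hΩ' : IsCompact ((z₀ - ·) '' Ω) := hΩ.image (continuous_const.sub continuous_id)
  obtain ⟨δ, hδ, hsub⟩ :=
    hΩ'.exists_cthickening_subset_open hU (by rintro _ ⟨y, hy, rfl⟩; exact hz₀ y hy)
  refine ⟨δ, hδ, _, hsub, hΩ'.cthickening, fun z hz y hy => ?_⟩
  refine mem_cthickening_of_dist_le _ (z₀ - y) _ _ (mem_image_of_mem _ hy) ?_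
  rw [dist_sub_right]
  exact (mem_ball.1 hz).le

theorem IsCompact.isOpen_setOf_forall_sub_mem (hΩ : IsCompact Ω) (hU : IsOpen U) :
    IsOpen {z | ∀ y ∈ Ω, z - y ∈ U} := by
  refine isOpen_iff_mem_nhds.2 fun z₀ hz₀ => ?_
  obtain ⟨δ, hδ, C, hCU, -, hC⟩ := hΩ.exists_ball_sub_subset_isCompact hU hz₀
  exact mem_of_superset (ball_mem_nhds z₀ hδ) fun z hz y hy => hCU (hC z hz y hy)

theorem IsCompact.exists_ball_bound_comp_sub {K : E → F} (hΩ : IsCompact Ω) (hU : IsOpen U)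
    (hK : ContinuousOn K U) {z₀ : E} (hz₀ : ∀ y ∈ Ω, z₀ - y ∈ U) :
    ∃ δ > 0, ∃ B, ∀ z ∈ ball z₀ δ, ∀ y ∈ Ω, z - y ∈ U ∧ ‖K (z - y)‖ ≤ B := by
  obtain ⟨δ, hδ, C, hCU, hC, hmem⟩ := hΩ.exists_ball_sub_subset_isCompact hU hz₀
  obtain ⟨B, hB⟩ := hC.exists_bound_of_continuousOn (hK.mono hCU)
  exact ⟨δ, hδ, B, fun z hz y hy => ⟨hCU (hmem z hz y hy), hB _ (hmem z hz y hy)⟩⟩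

variable [NormedSpace ℝ F] [MeasurableSpace E] [BorelSpace E] {μ : Measure E} {ρ : E → ℝ}

theorem IsCompact.integrableOn_smul_comp_sub {K : E → F} (hΩ : IsCompact Ω)
    (hρ : IntegrableOn ρ Ω μ) (hK : ContinuousOn K U) {z : E} (hz : ∀ y ∈ Ω, z - y ∈ U) :
    IntegrableOn (fun y => ρ y • K (z - y)) Ω μ :=
  hρ.smul_continuousOn (hK.comp (continuousOn_const.sub continuousOn_id) fun y hy => hz y hy) hΩ

theorem IsCompact.continuousOn_setIntegral_smul_comp_sub {K : E → F} (hΩ : IsCompact Ω)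
    (hU : IsOpen U) (hρ : IntegrableOn ρ Ω μ) (hK : ContinuousOn K U) :
    ContinuousOn (fun z => ∫ y in Ω, ρ y • K (z - y) ∂μ) {z | ∀ y ∈ Ω, z - y ∈ U} := by
  intro z₀ hz₀
  obtain ⟨δ, hδ, B, hB⟩ := hΩ.exists_ball_bound_comp_sub hU hK hz₀
  refine (continuousAt_of_dominated (bound := fun y => ‖ρ y‖ * B) ?_ ?_
    (hρ.norm.mul_const B) ?_).continuousWithinAt
  · filter_upwards [ball_mem_nhds z₀ hδ] with z hz
    exact (hΩ.integrableOn_smul_comp_sub hρ hK fun y hy => (hB z hz y hy).1).aestronglyMeasurable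
  · filter_upwards [ball_mem_nhds z₀ hδ] with z hz
    filter_upwards [ae_restrict_mem hΩ.measurableSet] with y hy
    rw [norm_smul]
    gcongr
    exact (hB z hz y hy).2
  · filter_upwards [ae_restrict_mem hΩ.measurableSet] with y hy
    exact ((hK.continuousAt (hU.mem_nhds (hz₀ y hy))).comp (f := (· - y))
      (continuous_sub_right y).continuousAt).const_smul (ρ y)

variable [NormedSpace ℝ E]

theorem IsCompact.hasFDerivAt_setIntegral_smul_comp_sub {K : E → F} (hΩ : IsCompact Ω)
    (hU : IsOpen U) (hρ : IntegrableOn ρ Ω μ) (hK : ContDiffOn ℝ 1 K U) {z₀ : E}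
    (hz₀ : ∀ y ∈ Ω, z₀ - y ∈ U) :
    HasFDerivAt (fun z => ∫ y in Ω, ρ y • K (z - y) ∂μ)
      (∫ y in Ω, ρ y • fderiv ℝ K (z₀ - y) ∂μ) z₀ := by
  have hK' : ContinuousOn (fderiv ℝ K) U := hK.continuousOn_fderiv_of_isOpen hU le_rfl
  obtain ⟨δ, hδ, B, hB⟩ := hΩ.exists_ball_bound_comp_sub hU hK' hz₀
  refine hasFDerivAt_integral_of_dominated_of_fderiv_le
    (F' := fun z y => ρ y • fderiv ℝ K (z - y)) (bound := fun y => ‖ρ y‖ * B)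
    (ball_mem_nhds z₀ hδ) ?_ (hΩ.integrableOn_smul_comp_sub hρ hK.continuousOn hz₀).integrable
    (hΩ.integrableOn_smul_comp_sub hρ hK' hz₀).aestronglyMeasurable ?_
    (hρ.norm.mul_const B) ?_
  · filter_upwards [ball_mem_nhds z₀ hδ] with z hz
    exact (hΩ.integrableOn_smul_comp_sub hρ hK.continuousOn
      fun y hy => (hB z hz y hy).1).aestronglyMeasurable
  · filter_upwards [ae_restrict_mem hΩ.measurableSet] with y hy z hz
    rw [norm_smul]
    gcongr
    exact (hB z hz y hy).2
  · filter_upwards [ae_restrict_mem hΩ.measurableSet] with y hy z hz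
    have hzy := (hB z hz y hy).1
    have hKd : HasFDerivAt K (fderiv ℝ K (z - y)) (z - y) :=
      ((hK.differentiableOn one_ne_zero _ hzy).differentiableAt (hU.mem_nhds hzy)).hasFDerivAt
    exact (hKd.comp z ((hasFDerivAt_id z).sub_const y)).const_smul (ρ y)

theorem IsCompact.contDiffOn_setIntegral_smul_comp_sub {n : ℕ} {K : E → F} (hΩ : IsCompact Ω)
    (hU : IsOpen U) (hρ : IntegrableOn ρ Ω μ) (hK : ContDiffOn ℝ n K U) :
    ContDiffOn ℝ n (fun z => ∫ y in Ω, ρ y • K (z - y) ∂μ) {z | ∀ y ∈ Ω, z - y ∈ U} := by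
  induction n generalizing F with
  | zero =>
    exact contDiffOn_zero.2 (hΩ.continuousOn_setIntegral_smul_comp_sub hU hρ hK.continuousOn)
  | succ n ih =>
    have hderiv z (hz : ∀ y ∈ Ω, z - y ∈ U) :=
      hΩ.hasFDerivAt_setIntegral_smul_comp_sub hU hρ (hK.of_le (by simp)) hz
    rw [Nat.cast_succ, contDiffOn_succ_iff_fderiv_of_isOpen (hΩ.isOpen_setOf_forall_sub_mem hU)]
    refine ⟨fun z hz => (hderiv z hz).differentiableAt.differentiableWithinAt, by simp, ?_⟩
    exact (ih (hK.fderiv_of_isOpen hU le_rfl)).congr fun z hz => (hderiv z hz).fderiv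

theorem IsCompact.hasFDerivAt_fderiv_setIntegral_smul_comp_sub_apply {K : E → F}
    (hΩ : IsCompact Ω) (hU : IsOpen U) (hρ : IntegrableOn ρ Ω μ) (hK : ContDiffOn ℝ 2 K U)
    {x : E} (hx : ∀ y ∈ Ω, x - y ∈ U) (v : E) :
    HasFDerivAt (fun z => fderiv ℝ (fun z => ∫ y in Ω, ρ y • K (z - y) ∂μ) z v)
      (∫ y in Ω, ρ y • fderiv ℝ (fun w => fderiv ℝ K w v) (x - y) ∂μ) x := by
  have hK' : ContDiffOn ℝ 1 (fderiv ℝ K) U := hK.fderiv_of_isOpen hU (by norm_num)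
  refine (hΩ.hasFDerivAt_setIntegral_smul_comp_sub hU hρ
    (hK'.clm_apply contDiffOn_const) hx).congr_of_eventuallyEq ?_
  filter_upwards [(hΩ.isOpen_setOf_forall_sub_mem hU).mem_nhds hx] with z hz
  rw [(hΩ.hasFDerivAt_setIntegral_smul_comp_sub hU hρ (hK.of_le one_le_two) hz).fderiv,
    ContinuousLinearMap.integral_apply
      (hΩ.integrableOn_smul_comp_sub hρ hK'.continuousOn hz).integrable]
  simp only [smul_apply]

end ParametricIntegral

section NormHessian

variable {E : Type*} [NormedAddCommGroup E] [InnerProductSpace ℝ E]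

theorem hasFDerivAt_norm_of_ne_zero {z : E} (hz : z ≠ 0) :
    HasFDerivAt (‖·‖) (‖z‖⁻¹ • innerSL ℝ z) z := by
  have hz' : ‖z‖ ≠ 0 := norm_ne_zero_iff.2 hz
  have hsqrt := (Real.hasDerivAt_sqrt (pow_ne_zero 2 hz')).comp_hasFDerivAt z
    (hasStrictFDerivAt_norm_sq z).hasFDerivAt
  simp only [Function.comp_def, Real.sqrt_sq (norm_nonneg _)] at hsqrt
  refine hsqrt.congr_fderiv ?_
  ext v
  simp only [one_div, mul_inv_rev, smul_apply, coe_innerSL_apply, nsmul_eq_mul, Nat.cast_ofNat,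
    smul_eq_mul]
  field_simp

theorem hasFDerivAt_fderiv_norm_apply {z : E} (hz : z ≠ 0) (v : E) :
    HasFDerivAt (fun w => fderiv ℝ (‖·‖) w v)
      (‖z‖⁻¹ • innerSL ℝ v - (inner ℝ z v / ‖z‖ ^ 3) • innerSL ℝ z) z := by
  have hz' : ‖z‖ ≠ 0 := norm_ne_zero_iff.2 hz
  have hinv : HasFDerivAt (fun w : E => ‖w‖⁻¹) (-(‖z‖ ^ 2)⁻¹ • ‖z‖⁻¹ • innerSL ℝ z) z :=
    (hasDerivAt_inv hz').comp_hasFDerivAt z (hasFDerivAt_norm_of_ne_zero hz)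
  have hfderiv : (fun w => fderiv ℝ (‖·‖) w v) =ᶠ[𝓝 z] fun w => ‖w‖⁻¹ * innerSL ℝ v w := by
    filter_upwards [isOpen_ne.mem_nhds hz] with w hw
    simp [(hasFDerivAt_norm_of_ne_zero hw).fderiv, real_inner_comm]
  refine ((hinv.mul (innerSL ℝ v).hasFDerivAt).congr_of_eventuallyEq hfderiv).congr_fderiv ?_
  ext w
  simp only [coe_innerSL_apply, real_inner_comm, neg_smul, smul_neg, add_apply, smul_apply,
    smul_eq_mul, neg_apply, sub_apply]
  field_simp
  ring

theorem OrthonormalBasis.sum_fderiv_fderiv_norm_apply {ι : Type*} [Fintype ι]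
    (b : OrthonormalBasis ι ℝ E) {z : E} (hz : z ≠ 0) :
    ∑ i, fderiv ℝ (fun w => fderiv ℝ (‖·‖) w (b i)) z (b i) = (Fintype.card ι - 1) / ‖z‖ := by
  have hz' : ‖z‖ ≠ 0 := norm_ne_zero_iff.2 hz
  simp only [(hasFDerivAt_fderiv_norm_apply hz _).fderiv, sub_apply, smul_apply,
    coe_innerSL_apply, smul_eq_mul, real_inner_self_eq_norm_sq, b.orthonormal.1, one_pow, mul_one,
    div_mul_eq_mul_div, ← sq, Finset.sum_sub_distrib, ← Finset.sum_div, b.sum_sq_inner_left,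
    Finset.sum_const, Finset.card_univ, nsmul_eq_mul]
  field_simp

end NormHessian

section Laplacian

local notation "ℝ³" => EuclideanSpace ℝ (Fin 3)

theorem lap_norm {z : ℝ³} (hz : z ≠ 0) : lap (‖·‖) z = 2 / ‖z‖ := by
  have h := (EuclideanSpace.basisFun (Fin 3) ℝ).sum_fderiv_fderiv_norm_apply hz
  simp only [EuclideanSpace.basisFun_apply, Fintype.card_fin] at h
  rw [lap, h]
  norm_num

theorem IsCompact.lap_setIntegral_mul_comp_sub {μ : Measure ℝ³} {Ω U : Set ℝ³} {ρ K : ℝ³ → ℝ}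
    (hΩ : IsCompact Ω) (hU : IsOpen U) (hρ : IntegrableOn ρ Ω μ) (hK : ContDiffOn ℝ 2 K U)
    {x : ℝ³} (hx : ∀ y ∈ Ω, x - y ∈ U) :
    lap (fun z => ∫ y in Ω, ρ y * K (z - y) ∂μ) x = ∫ y in Ω, ρ y * lap K (x - y) ∂μ := by
  have hD2 i := hΩ.hasFDerivAt_fderiv_setIntegral_smul_comp_sub_apply hU hρ hK hx
    (EuclideanSpace.single i 1)
  have hint i : IntegrableOn
      (fun y => ρ y • fderiv ℝ (fun w => fderiv ℝ K w (EuclideanSpace.single i 1)) (x - y)) Ω μ :=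
    hΩ.integrableOn_smul_comp_sub hρ (((hK.fderiv_of_isOpen hU (by norm_num)).clm_apply
      contDiffOn_const).continuousOn_fderiv_of_isOpen hU le_rfl) hx
  simp only [smul_eq_mul] at hD2
  calc lap (fun z => ∫ y in Ω, ρ y * K (z - y) ∂μ) x
      = ∑ i, ∫ y in Ω, ρ y * fderiv ℝ (fun w => fderiv ℝ K w (EuclideanSpace.single i 1)) (x - y)
          (EuclideanSpace.single i 1) ∂μ := by
        simp only [lap, fun i => (hD2 i).fderiv,
          fun i => ContinuousLinearMap.integral_apply (hint i).integrable,
          smul_apply, smul_eq_mul]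
    _ = ∫ y in Ω, ∑ i, ρ y * fderiv ℝ (fun w => fderiv ℝ K w (EuclideanSpace.single i 1))
          (x - y) (EuclideanSpace.single i 1) ∂μ :=
        (integral_finsetSum _ fun i _ => (hint i).integrable.apply_continuousLinearMap _).symm
    _ = ∫ y in Ω, ρ y * lap K (x - y) ∂μ := by simp only [lap, Finset.mul_sum]

end Laplacian

theorem superpotential_neg_laplacian_eq_newton_potential_general
    (Ω : Set (EuclideanSpace ℝ (Fin 3))) (hΩ : IsCompact Ω)
    (ρ : EuclideanSpace ℝ (Fin 3) → ℝ) (hρ : Measurable ρ)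
    (M : ℝ) (hρbd : ∀ y, |ρ y| ≤ M)
    (u : EuclideanSpace ℝ (Fin 3) → ℝ)
    (hu : u = fun x => (1 / (8 * π)) * ∫ y in Ω, ‖x - y‖ * ρ y)
    (x : EuclideanSpace ℝ (Fin 3)) (hx : x ∉ Ω) :
    ContDiffAt ℝ 2 u x ∧
      lap u x = (1 / (4 * π)) * ∫ y in Ω, ρ y / ‖x - y‖ := by
  have hcρ : IntegrableOn (fun y => 1 / (8 * π) * ρ y) Ω :=
    (Measure.integrableOn_of_bounded hΩ.measure_lt_top.ne hρ.aestronglyMeasurable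
      (ae_of_all _ hρbd)).const_mul _
  have hU : IsOpen ({0}ᶜ : Set (EuclideanSpace ℝ (Fin 3))) := isOpen_compl_singleton
  have hxΩ : ∀ y ∈ Ω, x - y ∈ ({0}ᶜ : Set (EuclideanSpace ℝ (Fin 3))) :=
    fun y hy => sub_ne_zero.2 (ne_of_mem_of_not_mem hy hx).symm
  have hnorm : ContDiffOn ℝ 2 (‖·‖) ({0}ᶜ : Set (EuclideanSpace ℝ (Fin 3))) :=
    fun w hw => (contDiffAt_norm ℝ hw).contDiffWithinAt
  have hu' : u = fun z => ∫ y in Ω, 1 / (8 * π) * ρ y * ‖z - y‖ := by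
    simp only [hu, ← integral_const_mul, mul_assoc, mul_comm (ρ _)]
  subst hu'
  refine ⟨?_, ?_⟩
  · exact (hΩ.contDiffOn_setIntegral_smul_comp_sub hU hcρ (n := 2) hnorm).contDiffAt
      ((hΩ.isOpen_setOf_forall_sub_mem hU).mem_nhds hxΩ)
  · rw [hΩ.lap_setIntegral_mul_comp_sub hU hcρ hnorm hxΩ, ← integral_const_mul]
    refine setIntegral_congr_fun hΩ.measurableSet fun y hy => ?_
    rw [lap_norm (hxΩ y hy)]
    field_simp
    ring

theorem superpotential_neg_laplacian_eq_newton_potential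
    (Ω : Set (EuclideanSpace ℝ (Fin 3))) (hΩ : IsCompact Ω)
    (ρ : EuclideanSpace ℝ (Fin 3) → ℝ) (hρ : Measurable ρ)
    (M : ℝ) (hρbd : ∀ y, |ρ y| ≤ M)
    (hρ0 : ∀ y ∉ Ω, ρ y = 0)
    (u : EuclideanSpace ℝ (Fin 3) → ℝ)
    (hu : u = fun x => (1 / (8 * π)) * ∫ y in Ω, ‖x - y‖ * ρ y)
    (x : EuclideanSpace ℝ (Fin 3)) (hx : x ∉ Ω) :
    ContDiffAt ℝ 2 u x ∧
      lap u x = (1 / (4 * π)) * ∫ y in Ω, ρ y / ‖x - y‖ :=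
  superpotential_neg_laplacian_eq_newton_potential_general Ω hΩ ρ hρ M hρbd u hu x hx
end
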